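/- Assume hypothesis (H1) and the family setup below. Then there exists B > 0 such that ∫_ε^{1/ε} η_ε(x)·e^{−2Q(x)} dx ≥ B for every ε ∈ (0,1/2). -/

import Mathlib

/-!
Conjugating by the ground state, `v = η e^{-Q}` is a Dirichlet eigenfunction of the Schrödinger
operator `-d²/dx² + W` on `[ε, 1/ε]` with eigenvalue `2λ ≤ 2Λ`, normalized in `L²(dx)`.
Shifting the potential by `C` makes it nonnegative, so integrating `v v''` by parts bounds both
`∫ v'²` and `∫ (W + C) v²` by `K = max (2Λ + C) 1`. The first bound gives `v² ≤ 2√K` pointwise,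
so `[ε, a]` carries little `L²` mass for a small fixed `a`; the second, together with `W → ∞`,
does the same for `[b, 1/ε]`. Hence `v²` has mass at least `3/4` on `[a, b]`, where `e^{-Q}` is
bounded below by a constant `c`, and `η e^{-2Q} = v e^{-Q} ≥ c v ≥ c v² / √(2√K)` there.
-/

open MeasureTheory intervalIntegral Filter

open Set Real

theorem hasDerivAt_integral_of_continuousOn_Ioi {q : ℝ → ℝ} {c a x : ℝ}
    (hq : ContinuousOn q (Ioi c)) (ha : c < a) (hx : c < x) :
    HasDerivAt (fun u => ∫ y in a..u, q y) (q x) x :=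
  integral_hasDerivAt_right
    ((hq.mono fun _ hy => lt_of_lt_of_le (lt_min ha hx) hy.1).intervalIntegrable)
    (hq.stronglyMeasurableAtFilter isOpen_Ioi x hx)
    (hq.continuousAt (isOpen_Ioi.mem_nhds hx))

theorem hasDerivAt_mul_exp_neg {g Q : ℝ → ℝ} {g' q x : ℝ} (hg : HasDerivAt g g' x)
    (hQ : HasDerivAt Q q x) :
    HasDerivAt (fun y => g y * exp (-Q y)) ((g' - q * g x) * exp (-Q x)) x :=
  (hg.mul hQ.fun_neg.exp).congr_deriv (by ring)

theorem sq_le_integral_sq_add_integral_deriv_sq {f f' : ℝ → ℝ} {α β s x : ℝ}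
    (hf : ∀ x ∈ Icc α β, HasDerivAt f (f' x) x) (hf' : ContinuousOn f' (Icc α β))
    (hα : f α = 0) (hs : 0 < s) (hx : x ∈ Icc α β) :
    f x ^ 2 ≤ s * (∫ t in α..β, f t ^ 2) + s⁻¹ * ∫ t in α..β, f' t ^ 2 := by
  have hfc : ContinuousOn f (Icc α β) := fun t ht => (hf t ht).continuousAt.continuousWithinAt
  have hsub : Icc α x ⊆ Icc α β := Icc_subset_Icc_right hx.2
  have hαβ : α ≤ β := hx.1.trans hx.2
  have hff' : IntervalIntegrable (fun t => 2 * f t * f' t) volume α x :=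
    (((continuousOn_const.mul hfc).mul hf').mono hsub).intervalIntegrable_of_Icc hx.1
  have hsf2 : ContinuousOn (fun t => s * f t ^ 2) (Icc α β) := continuousOn_const.mul (hfc.pow 2)
  have hsf'2 : ContinuousOn (fun t => s⁻¹ * f' t ^ 2) (Icc α β) :=
    continuousOn_const.mul (hf'.pow 2)
  have hint : IntervalIntegrable (fun t => s * f t ^ 2 + s⁻¹ * f' t ^ 2) volume α β :=
    (hsf2.add hsf'2).intervalIntegrable_of_Icc hαβ
  have hftc : f x ^ 2 = ∫ t in α..x, 2 * f t * f' t := by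
    rw [integral_eq_sub_of_hasDerivAt (f := fun t => f t ^ 2) (fun t ht => ?_) hff', hα]
    · ring
    rw [uIcc_of_le hx.1] at ht
    exact ((hf t (hsub ht)).fun_pow 2).congr_deriv (by norm_num)
  have hamgm : ∀ t, 2 * f t * f' t ≤ s * f t ^ 2 + s⁻¹ * f' t ^ 2 := by
    intro t
    have h := div_nonneg (sq_nonneg (s * f t - f' t)) hs.le
    have hexp : (s * f t - f' t) ^ 2 / s = s * f t ^ 2 - 2 * f t * f' t + s⁻¹ * f' t ^ 2 := by
      field_simp; ring
    linarith
  calc f x ^ 2 ≤ ∫ t in α..x, (s * f t ^ 2 + s⁻¹ * f' t ^ 2) := by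
        rw [hftc]
        refine integral_mono_on hx.1 hff' (hint.mono_set ?_) fun t _ => hamgm t
        rw [uIcc_of_le hx.1, uIcc_of_le hαβ]; exact hsub
    _ ≤ ∫ t in α..β, (s * f t ^ 2 + s⁻¹ * f' t ^ 2) :=
        integral_mono_interval le_rfl hx.1 hx.2 (Eventually.of_forall fun t => by positivity) hint
    _ = _ := by
        rw [intervalIntegral.integral_add (hsf2.intervalIntegrable_of_Icc hαβ)
            (hsf'2.intervalIntegrable_of_Icc hαβ),
          intervalIntegral.integral_const_mul, intervalIntegral.integral_const_mul]

theorem mul_integral_le_integral_mul_of_le {g V : ℝ → ℝ} {m α b β : ℝ} (hαb : α ≤ b)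
    (hbβ : b ≤ β) (hg : ContinuousOn g (Icc α β)) (hV : ContinuousOn V (Icc α β))
    (hg0 : ∀ x ∈ Icc α β, 0 ≤ g x) (hV0 : ∀ x ∈ Icc α β, 0 ≤ V x)
    (hm : ∀ x ∈ Ioo b β, m ≤ V x) :
    m * ∫ x in b..β, g x ≤ ∫ x in α..β, V x * g x := by
  have hsub : Icc b β ⊆ Icc α β := Icc_subset_Icc_left hαb
  have hVg : ContinuousOn (fun x => V x * g x) (Icc α β) := hV.mul hg
  rw [← intervalIntegral.integral_const_mul]
  calc ∫ x in b..β, m * g x ≤ ∫ x in b..β, V x * g x :=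
        integral_mono_on_of_le_Ioo hbβ
          ((continuousOn_const.mul (hg.mono hsub)).intervalIntegrable_of_Icc hbβ)
          ((hVg.mono hsub).intervalIntegrable_of_Icc hbβ)
          fun x hx => mul_le_mul_of_nonneg_right (hm x hx) (hg0 x (hsub (Ioo_subset_Icc_self hx)))
    _ ≤ ∫ x in α..β, V x * g x :=
        integral_mono_interval hαb hbβ le_rfl
          ((ae_restrict_iff' measurableSet_Ioc).2 (Eventually.of_forall fun x hx =>
            mul_nonneg (hV0 x (Ioc_subset_Icc_self hx)) (hg0 x (Ioc_subset_Icc_self hx))))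
          (hVg.intervalIntegrable_of_Icc (hαb.trans hbβ))

theorem mul_integral_sq_le_integral_mul {v w : ℝ → ℝ} {a b c M : ℝ} (hab : a ≤ b)
    (hv : ContinuousOn v (Icc a b)) (hw : ContinuousOn w (Icc a b))
    (hv0 : ∀ x ∈ Icc a b, 0 ≤ v x) (hvM : ∀ x ∈ Icc a b, v x ^ 2 ≤ M)
    (hc : 0 ≤ c) (hcw : ∀ x ∈ Icc a b, c ≤ w x) :
    c / √M * ∫ x in a..b, v x ^ 2 ≤ ∫ x in a..b, v x * w x := by
  rw [← intervalIntegral.integral_const_mul]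
  refine integral_mono_on hab ((continuousOn_const.mul (hv.pow 2)).intervalIntegrable_of_Icc hab)
    ((hv.mul hw).intervalIntegrable_of_Icc hab) fun x hx => ?_
  have hvx : v x ≤ √M := (le_abs_self _).trans (abs_le_sqrt (hvM x hx))
  calc c / √M * v x ^ 2 = c * v x * (v x / √M) := by ring
    _ ≤ c * v x * 1 := by
        gcongr
        · exact mul_nonneg hc (hv0 x hx)
        · exact div_le_one_of_le₀ hvx (sqrt_nonneg M)
    _ ≤ v x * w x := by nlinarith [hv0 x hx, hcw x hx]

/-- `f` is a Dirichlet eigenfunction of `-d²/dx² + V` on `[α, β]` with eigenvalue `μ`. -/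
structure IsDirichletEigenfunction (V : ℝ → ℝ) (μ α β : ℝ) (f f' f'' : ℝ → ℝ) : Prop where
  hasDerivAt : ∀ x ∈ Icc α β, HasDerivAt f (f' x) x
  hasDerivAt_deriv : ∀ x ∈ Icc α β, HasDerivAt f' (f'' x) x
  left_eq_zero : f α = 0
  right_eq_zero : f β = 0
  deriv2_eq : ∀ x ∈ Icc α β, f'' x = (V x - μ) * f x

namespace IsDirichletEigenfunction

variable {V f f' f'' : ℝ → ℝ} {μ α β : ℝ}

theorem continuousOn (hf : IsDirichletEigenfunction V μ α β f f' f'') :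
    ContinuousOn f (Icc α β) :=
  fun x hx => (hf.hasDerivAt x hx).continuousAt.continuousWithinAt

theorem continuousOn_deriv (hf : IsDirichletEigenfunction V μ α β f f' f'') :
    ContinuousOn f' (Icc α β) :=
  fun x hx => (hf.hasDerivAt_deriv x hx).continuousAt.continuousWithinAt

theorem integral_deriv_sq_add_integral_mul_sq (hf : IsDirichletEigenfunction V μ α β f f' f'')
    (hV : ContinuousOn V (Icc α β)) (hαβ : α ≤ β) :
    (∫ x in α..β, f' x ^ 2) + (∫ x in α..β, V x * f x ^ 2) = μ * ∫ x in α..β, f x ^ 2 := by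
  have hint : ∀ g : ℝ → ℝ, ContinuousOn g (Icc α β) → IntervalIntegrable g volume α β :=
    fun g hg => hg.intervalIntegrable_of_Icc hαβ
  have hf2 : ContinuousOn (fun x => f x ^ 2) (Icc α β) := hf.continuousOn.pow 2
  have hf'2 : ContinuousOn (fun x => f' x ^ 2) (Icc α β) := hf.continuousOn_deriv.pow 2
  have hVf2 : ContinuousOn (fun x => V x * f x ^ 2) (Icc α β) := hV.mul hf2
  have hμf2 : ContinuousOn (fun x => μ * f x ^ 2) (Icc α β) := continuousOn_const.mul hf2
  have hparts : ∫ x in α..β, (f' x ^ 2 + (V x * f x ^ 2 - μ * f x ^ 2)) = 0 := by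
    rw [integral_eq_sub_of_hasDerivAt (f := fun x => f x * f' x), hf.left_eq_zero,
      hf.right_eq_zero, zero_mul, zero_mul, sub_zero]
    · intro x hx
      rw [uIcc_of_le hαβ] at hx
      exact ((hf.hasDerivAt x hx).mul (hf.hasDerivAt_deriv x hx)).congr_deriv
        (by rw [hf.deriv2_eq x hx]; ring)
    · exact hint _ (hf'2.add (hVf2.sub hμf2))
  rw [intervalIntegral.integral_add (hint _ hf'2)
      (hint (fun x => V x * f x ^ 2 - μ * f x ^ 2) (hVf2.sub hμf2)),
    intervalIntegral.integral_sub (hint _ hVf2) (hint _ hμf2),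
    intervalIntegral.integral_const_mul] at hparts
  linarith

theorem integral_deriv_sq_le (hf : IsDirichletEigenfunction V μ α β f f' f'')
    (hV : ContinuousOn V (Icc α β)) (hV0 : ∀ x ∈ Icc α β, 0 ≤ V x) (hαβ : α ≤ β)
    (hnorm : ∫ x in α..β, f x ^ 2 = 1) :
    ∫ x in α..β, f' x ^ 2 ≤ μ := by
  have henergy := hf.integral_deriv_sq_add_integral_mul_sq hV hαβ
  rw [hnorm, mul_one] at henergy
  have hpot : 0 ≤ ∫ x in α..β, V x * f x ^ 2 :=
    intervalIntegral.integral_nonneg hαβ fun x hx => mul_nonneg (hV0 x hx) (sq_nonneg (f x))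
  linarith

theorem integral_mul_sq_le (hf : IsDirichletEigenfunction V μ α β f f' f'')
    (hV : ContinuousOn V (Icc α β)) (hαβ : α ≤ β) (hnorm : ∫ x in α..β, f x ^ 2 = 1) :
    ∫ x in α..β, V x * f x ^ 2 ≤ μ := by
  have henergy := hf.integral_deriv_sq_add_integral_mul_sq hV hαβ
  rw [hnorm, mul_one] at henergy
  have hkin : 0 ≤ ∫ x in α..β, f' x ^ 2 :=
    intervalIntegral.integral_nonneg hαβ fun x _ => sq_nonneg (f' x)
  linarith

theorem sq_le (hf : IsDirichletEigenfunction V μ α β f f' f'')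
    (hV : ContinuousOn V (Icc α β)) (hV0 : ∀ x ∈ Icc α β, 0 ≤ V x)
    (hnorm : ∫ x in α..β, f x ^ 2 = 1) {K : ℝ} (hK : 0 < K) (hμK : μ ≤ K) {x : ℝ}
    (hx : x ∈ Icc α β) : f x ^ 2 ≤ 2 * √K := by
  have hsK : 0 < √K := sqrt_pos.2 hK
  have hkin := hf.integral_deriv_sq_le hV hV0 (hx.1.trans hx.2) hnorm
  calc f x ^ 2 ≤ √K * (∫ t in α..β, f t ^ 2) + (√K)⁻¹ * ∫ t in α..β, f' t ^ 2 :=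
        sq_le_integral_sq_add_integral_deriv_sq hf.hasDerivAt hf.continuousOn_deriv
          hf.left_eq_zero hsK hx
    _ ≤ √K * 1 + (√K)⁻¹ * K := by
        rw [hnorm]; gcongr; exact hkin.trans hμK
    _ = 2 * √K := by
        rw [← div_eq_inv_mul, div_sqrt]; ring

theorem one_sub_le_integral_sq (hf : IsDirichletEigenfunction V μ α β f f' f'')
    (hV : ContinuousOn V (Icc α β)) (hV0 : ∀ x ∈ Icc α β, 0 ≤ V x)
    (hnorm : ∫ x in α..β, f x ^ 2 = 1) {K : ℝ} (hK : 0 < K) (hμK : μ ≤ K) {a b m : ℝ}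
    (hαa : α ≤ a) (hab : a ≤ b) (hbβ : b ≤ β) (hm : 0 < m) (hVm : ∀ x ∈ Ioo b β, m ≤ V x) :
    1 - (a - α) * (2 * √K) - K / m ≤ ∫ x in a..b, f x ^ 2 := by
  have hαβ : α ≤ β := hαa.trans (hab.trans hbβ)
  have hf2 : ContinuousOn (fun x => f x ^ 2) (Icc α β) := hf.continuousOn.pow 2
  have hint : ∀ u v, α ≤ u → u ≤ v → v ≤ β → IntervalIntegrable (fun x => f x ^ 2) volume u v :=
    fun u v hu huv hv => (hf2.mono (Icc_subset_Icc hu hv)).intervalIntegrable_of_Icc huv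
  have hsplit : (∫ x in α..a, f x ^ 2) + (∫ x in a..b, f x ^ 2) + (∫ x in b..β, f x ^ 2) = 1 := by
    rw [intervalIntegral.integral_add_adjacent_intervals (hint α a le_rfl hαa (hab.trans hbβ))
        (hint a b hαa hab hbβ),
      intervalIntegral.integral_add_adjacent_intervals (hint α b le_rfl (hαa.trans hab) hbβ)
        (hint b β (hαa.trans hab) hbβ le_rfl), hnorm]
  have hleft : ∫ x in α..a, f x ^ 2 ≤ (a - α) * (2 * √K) := by
    have h := norm_integral_le_of_norm_le_const (a := α) (b := a) (f := fun x => f x ^ 2)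
      (C := 2 * √K) fun x hx => by
        rw [uIoc_of_le hαa] at hx
        rw [Real.norm_of_nonneg (sq_nonneg _)]
        exact hf.sq_le hV hV0 hnorm hK hμK ⟨hx.1.le, hx.2.trans (hab.trans hbβ)⟩
    rw [abs_of_nonneg (sub_nonneg.2 hαa), mul_comm] at h
    exact (le_abs_self _).trans h
  have hright : ∫ x in b..β, f x ^ 2 ≤ K / m := by
    rw [le_div_iff₀ hm, mul_comm]
    exact (mul_integral_le_integral_mul_of_le (hαa.trans hab) hbβ hf2 hV
      (fun x _ => sq_nonneg (f x)) hV0 hVm).trans ((hf.integral_mul_sq_le hV hαβ hnorm).trans hμK)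
  linarith

end IsDirichletEigenfunction

theorem isDirichletEigenfunction_mul_exp_neg {q q' Q η η' η'' V : ℝ → ℝ} {lam μ α β : ℝ}
    (hq : ∀ x ∈ Icc α β, HasDerivAt q (q' x) x) (hQ : ∀ x ∈ Icc α β, HasDerivAt Q (q x) x)
    (hη : ∀ x ∈ Icc α β, HasDerivAt η (η' x) x) (hη' : ∀ x ∈ Icc α β, HasDerivAt η' (η'' x) x)
    (hα : η α = 0) (hβ : η β = 0)
    (hode : ∀ x ∈ Icc α β, (1/2) * η'' x - q x * η' x = -lam * η x)
    (hV : ∀ x ∈ Icc α β, V x - μ = q x ^ 2 - q' x - 2 * lam) :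
    IsDirichletEigenfunction V μ α β (fun x => η x * exp (-Q x))
      (fun x => (η' x - q x * η x) * exp (-Q x))
      (fun x => (η'' x - (q' x * η x + q x * η' x) - q x * (η' x - q x * η x)) * exp (-Q x)) where
  hasDerivAt x hx := hasDerivAt_mul_exp_neg (hη x hx) (hQ x hx)
  hasDerivAt_deriv x hx :=
    hasDerivAt_mul_exp_neg ((hη' x hx).sub ((hq x hx).mul (hη x hx))) (hQ x hx)
  left_eq_zero := by simp [hα]
  right_eq_zero := by simp [hβ]
  deriv2_eq x hx := by
    rw [hV x hx]
    linear_combination (2 * exp (-Q x)) * hode x hx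

theorem le_integral_mul_exp_neg_two_mul {q q' Q W η η' η'' : ℝ → ℝ} {C lam K α β a b m c : ℝ}
    (hq : ∀ x ∈ Icc α β, HasDerivAt q (q' x) x) (hq' : ContinuousOn q' (Icc α β))
    (hQ : ∀ x ∈ Icc α β, HasDerivAt Q (q x) x) (hW : ∀ x ∈ Icc α β, W x = q x ^ 2 - q' x)
    (hWC : ∀ x ∈ Icc α β, -C ≤ W x)
    (hη : ∀ x ∈ Icc α β, HasDerivAt η (η' x) x) (hη' : ∀ x ∈ Icc α β, HasDerivAt η' (η'' x) x)
    (hα : η α = 0) (hβ : η β = 0) (hpos : ∀ x ∈ Ioo α β, 0 < η x)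
    (hode : ∀ x ∈ Icc α β, (1/2) * η'' x - q x * η' x = -lam * η x)
    (hnorm : ∫ x in α..β, η x ^ 2 * exp (-2 * Q x) = 1)
    (hK : 0 < K) (hlam : 2 * lam + C ≤ K) (hαa : α ≤ a) (hab : a ≤ b) (hbβ : b ≤ β)
    (hm : 0 < m) (hWm : ∀ x ∈ Ioo b β, m ≤ W x + C)
    (hc : 0 ≤ c) (hcQ : ∀ x ∈ Icc a b, c ≤ exp (-Q x)) :
    c / √(2 * √K) * (1 - (a - α) * (2 * √K) - K / m) ≤ ∫ x in α..β, η x * exp (-2 * Q x) := by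
  have hαβ : α ≤ β := hαa.trans (hab.trans hbβ)
  have hsub : Icc a b ⊆ Icc α β := Icc_subset_Icc hαa hbβ
  have hv := isDirichletEigenfunction_mul_exp_neg (V := fun x => W x + C) (μ := 2 * lam + C)
    hq hQ hη hη' hα hβ hode fun x hx => by rw [hW x hx]; ring
  have hqc : ContinuousOn q (Icc α β) := fun x hx => (hq x hx).continuousAt.continuousWithinAt
  have hV : ContinuousOn (fun x => W x + C) (Icc α β) :=
    (((hqc.pow 2).sub hq').congr hW).add continuousOn_const
  have hV0 : ∀ x ∈ Icc α β, 0 ≤ W x + C := fun x hx => by linarith [hWC x hx]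
  have hexp2 : ∀ x, exp (-2 * Q x) = exp (-Q x) * exp (-Q x) := fun x => by
    rw [← exp_add]; ring_nf
  have hnorm' : ∫ x in α..β, (η x * exp (-Q x)) ^ 2 = 1 :=
    (integral_congr fun x _ => by simp only [hexp2]; ring).trans hnorm
  have hE : ContinuousOn (fun x => exp (-Q x)) (Icc α β) :=
    fun x hx => (hQ x hx).fun_neg.exp.continuousAt.continuousWithinAt
  have hη0 : ∀ x ∈ Icc α β, 0 ≤ η x := by
    rintro x ⟨hαx, hxβ⟩
    rcases hαx.eq_or_lt with h | hαx
    · rw [← h, hα]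
    rcases hxβ.eq_or_lt with h | hxβ
    · rw [h, hβ]
    exact (hpos x ⟨hαx, hxβ⟩).le
  calc c / √(2 * √K) * (1 - (a - α) * (2 * √K) - K / m)
      ≤ c / √(2 * √K) * ∫ x in a..b, (η x * exp (-Q x)) ^ 2 := by
        gcongr
        exact hv.one_sub_le_integral_sq hV hV0 hnorm' hK hlam hαa hab hbβ hm hWm
    _ ≤ ∫ x in a..b, η x * exp (-Q x) * exp (-Q x) :=
        mul_integral_sq_le_integral_mul hab (hv.continuousOn.mono hsub) (hE.mono hsub)
          (fun x hx => mul_nonneg (hη0 x (hsub hx)) (exp_pos _).le)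
          (fun x hx => hv.sq_le hV hV0 hnorm' hK hlam (hsub hx)) hc hcQ
    _ ≤ ∫ x in α..β, η x * exp (-Q x) * exp (-Q x) :=
        integral_mono_interval hαa hab hbβ
          ((ae_restrict_iff' measurableSet_Ioc).2 (Eventually.of_forall fun x hx =>
            mul_nonneg (mul_nonneg (hη0 x (Ioc_subset_Icc_self hx)) (exp_pos _).le) (exp_pos _).le))
          ((hv.continuousOn.mul hE).intervalIntegrable_of_Icc hαβ)
    _ = ∫ x in α..β, η x * exp (-2 * Q x) := by simp only [hexp2, mul_assoc]

theorem stmt_6_general (q q' Q W : ℝ → ℝ)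
    (hq : ∀ x ∈ Set.Ioi (0:ℝ), HasDerivAt q (q' x) x)
    (hq'cont : ContinuousOn q' (Set.Ioi 0))
    (hQ : ∀ x, Q x = ∫ y in (1:ℝ)..x, q y)
    (hWdef : ∀ x ∈ Set.Ioi (0:ℝ), W x = q x ^ 2 - q' x)
    -- Hypothesis (H1)
    (C : ℝ) (hWlb : ∀ x ∈ Set.Ioi (0:ℝ), -C ≤ W x)
    (hWtop : Tendsto W atTop atTop)
    -- Family setup
    (Λ : ℝ) (lam : ℝ → ℝ) (η η' η'' : ℝ → ℝ → ℝ)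
    (hlam : ∀ ε ∈ Set.Ioo (0:ℝ) (1/2), lam ε ≤ Λ)
    (hη' : ∀ ε ∈ Set.Ioo (0:ℝ) (1/2), ∀ x ∈ Set.Icc ε (1/ε),
      HasDerivAt (η ε) (η' ε x) x)
    (hη'' : ∀ ε ∈ Set.Ioo (0:ℝ) (1/2), ∀ x ∈ Set.Icc ε (1/ε),
      HasDerivAt (η' ε) (η'' ε x) x)
    (hpos : ∀ ε ∈ Set.Ioo (0:ℝ) (1/2), ∀ x ∈ Set.Ioo ε (1/ε), 0 < η ε x)
    (hbd : ∀ ε ∈ Set.Ioo (0:ℝ) (1/2), η ε ε = 0 ∧ η ε (1/ε) = 0)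
    (hode : ∀ ε ∈ Set.Ioo (0:ℝ) (1/2), ∀ x ∈ Set.Icc ε (1/ε),
      (1/2) * η'' ε x - q x * η' ε x = -(lam ε) * η ε x)
    (hnorm : ∀ ε ∈ Set.Ioo (0:ℝ) (1/2),
      (∫ x in ε..(1/ε), (η ε x) ^ 2 * Real.exp (-2 * Q x)) = 1) :
    ∃ B > 0, ∀ ε ∈ Set.Ioo (0:ℝ) (1/2),
      B ≤ ∫ x in ε..(1/ε), η ε x * Real.exp (-2 * Q x) := by
  have hqc : ContinuousOn q (Ioi 0) := fun x hx => (hq x hx).continuousAt.continuousWithinAt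
  have hQd : ∀ x ∈ Ioi (0:ℝ), HasDerivAt Q (q x) x := fun x hx => by
    rw [funext hQ]
    exact hasDerivAt_integral_of_continuousOn_Ioi hqc one_pos hx
  set K := max (2 * Λ + C) 1
  have hK : 0 < K := one_pos.trans_le (le_max_right _ _)
  set a := 1 / (16 * √K)
  have ha : 0 < a := by positivity
  have ha2 : a ≤ 1 / 2 := by
    have : 1 ≤ √K := one_le_sqrt.2 (le_max_right _ _)
    rw [div_le_div_iff₀ (by positivity) two_pos]; linarith
  obtain ⟨b, hb2, hbW⟩ : ∃ b, 2 ≤ b ∧ ∀ x, b ≤ x → 8 * K ≤ W x + C := by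
    obtain ⟨b, hb⟩ := (hWtop.eventually_ge_atTop (8 * K - C)).exists_forall_of_atTop
    exact ⟨max b 2, le_max_right _ _, fun x hx => by linarith [hb x ((le_max_left _ _).trans hx)]⟩
  obtain ⟨x₀, -, hx₀⟩ := isCompact_Icc.exists_isMinOn (nonempty_Icc.2 (by linarith))
    fun x (hx : x ∈ Icc a b) =>
      (hQd x (ha.trans_le hx.1)).fun_neg.exp.continuousAt.continuousWithinAt
  refine ⟨exp (-Q x₀) / √(2 * √K) * (3 / 4), by positivity, fun ε hε => ?_⟩
  have hL : 2 < 1 / ε := by rw [lt_div_iff₀ hε.1]; linarith [hε.2]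
  have hεpos : Icc ε (1 / ε) ⊆ Ioi 0 := fun x hx => hε.1.trans_le hx.1
  have hab : max a ε ≤ min b (1 / ε) := by
    simp only [max_le_iff, le_min_iff]; refine ⟨⟨?_, ?_⟩, ?_, ?_⟩ <;> linarith [hε.2]
  have h34 : 3 / 4 ≤ 1 - (max a ε - ε) * (2 * √K) - K / (8 * K) := by
    have h1 : (max a ε - ε) * (2 * √K) ≤ a * (2 * √K) := by
      gcongr; exact sub_le_iff_le_add.2 (max_le (by linarith [hε.1]) (by linarith))
    have h2 : a * (2 * √K) = 1 / 8 := by simp only [a]; field_simp; ring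
    have h3 : K / (8 * K) = 1 / 8 := by field_simp
    linarith
  refine le_trans (by gcongr) (le_integral_mul_exp_neg_two_mul (fun x hx => hq x (hεpos hx))
    (hq'cont.mono hεpos) (fun x hx => hQd x (hεpos hx)) (fun x hx => hWdef x (hεpos hx))
    (fun x hx => hWlb x (hεpos hx)) (hη' ε hε) (hη'' ε hε) (hbd ε hε).1 (hbd ε hε).2 (hpos ε hε)
    (hode ε hε) (hnorm ε hε) hK (by linarith [hlam ε hε, le_max_left (2 * Λ + C) 1])
    (le_max_right _ _) hab (min_le_right _ _) (by positivity : (0:ℝ) < 8 * K)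
    (fun x hx => hbW x ((min_lt_iff.1 hx.1).resolve_right hx.2.not_gt).le) (exp_pos _).le
    fun x hx => hx₀ ⟨(le_max_left _ _).trans hx.1, hx.2.trans (min_le_left _ _)⟩)

theorem stmt_6 (q q' Q W : ℝ → ℝ)
    (hq : ∀ x ∈ Set.Ioi (0:ℝ), HasDerivAt q (q' x) x)
    (hq'cont : ContinuousOn q' (Set.Ioi 0))
    (hQ : ∀ x, Q x = ∫ y in (1:ℝ)..x, q y)
    (hWdef : ∀ x ∈ Set.Ioi (0:ℝ), W x = q x ^ 2 - q' x)
    -- Hypothesis (H1)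
    (C : ℝ) (hC : 0 < C) (hWlb : ∀ x ∈ Set.Ioi (0:ℝ), -C ≤ W x)
    (hWtop : Tendsto W atTop atTop)
    -- Family setup
    (Λ : ℝ) (lam : ℝ → ℝ) (η η' η'' : ℝ → ℝ → ℝ)
    (hlam : ∀ ε ∈ Set.Ioo (0:ℝ) (1/2), lam ε ≤ Λ)
    (hη' : ∀ ε ∈ Set.Ioo (0:ℝ) (1/2), ∀ x ∈ Set.Icc ε (1/ε),
      HasDerivAt (η ε) (η' ε x) x)
    (hη'' : ∀ ε ∈ Set.Ioo (0:ℝ) (1/2), ∀ x ∈ Set.Icc ε (1/ε),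
      HasDerivAt (η' ε) (η'' ε x) x)
    (hη''cont : ∀ ε ∈ Set.Ioo (0:ℝ) (1/2), ContinuousOn (η'' ε) (Set.Icc ε (1/ε)))
    (hpos : ∀ ε ∈ Set.Ioo (0:ℝ) (1/2), ∀ x ∈ Set.Ioo ε (1/ε), 0 < η ε x)
    (hbd : ∀ ε ∈ Set.Ioo (0:ℝ) (1/2), η ε ε = 0 ∧ η ε (1/ε) = 0)
    (hode : ∀ ε ∈ Set.Ioo (0:ℝ) (1/2), ∀ x ∈ Set.Icc ε (1/ε),
      (1/2) * η'' ε x - q x * η' ε x = -(lam ε) * η ε x)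
    (hnorm : ∀ ε ∈ Set.Ioo (0:ℝ) (1/2),
      (∫ x in ε..(1/ε), (η ε x) ^ 2 * Real.exp (-2 * Q x)) = 1) :
    ∃ B > 0, ∀ ε ∈ Set.Ioo (0:ℝ) (1/2),
      B ≤ ∫ x in ε..(1/ε), η ε x * Real.exp (-2 * Q x) :=
  stmt_6_general q q' Q W hq hq'cont hQ hWdef C hWlb hWtop Λ lam η η' η'' hlam hη' hη'' hpos hbd
    hode hnorm
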